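/- arXiv:1911.00731 — 2 statements merged into one kernel-verified Lean document; each statement's English description precedes it below -/
import Mathlib

section
/- (Deterministic grid argmin lemma, core of the proof of Theorem 1.) Let E be a real inner product space, K ⊆ E convex, λ > 0, ε > 0, and F : E → ℝ differentiable on K with: F λ-strongly convex on K (i.e. F(θ₂) ≥ F(θ₁) + ⟨∇F(θ₁), θ₂ − θ₁⟩ + λ‖θ₂ − θ₁‖² for all θ₁, θ₂ ∈ K), ∇F 1-Lipschitz on K, and θ* ∈ K with ∇F(θ*) = 0. Let T ⊆ K be a nonempty finite set containing some point p* with ‖p* − θ*‖ ≤ ε/2, let Ĝ : T → E satisfy ‖Ĝ(p) − ∇F(p)‖ ≤ ε/4 for all p ∈ T, and let θ̂ ∈ T minimize ‖Ĝ(p)‖ over p ∈ T. Then ‖θ̂ − θ*‖ ≤ ε/λ. -/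
open InnerProductSpace

/-! Adding the two strong-convexity inequalities at `θ̂` and `θ*` gives
`2λ‖θ̂ - θ*‖² ≤ ⟪∇F θ̂, θ̂ - θ*⟫`, hence `2λ‖θ̂ - θ*‖ ≤ ‖∇F θ̂‖`. The gradient at `θ̂` is small:
`Ĝ` is `ε/4`-close to `∇F`, `θ̂` minimizes `‖Ĝ‖`, and `‖∇F p*‖ ≤ ‖p* - θ*‖ ≤ ε/2` since
`∇F θ* = 0`; so `‖∇F θ̂‖ ≤ ε/2 + 2 · ε/4 = ε`. -/

theorem norm_le_norm_add_of_norm_approx_le {E : Type*} [SeminormedAddCommGroup E] {G g : E → E}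
    {δ : ℝ} {x p : E} (hx : ‖G x - g x‖ ≤ δ) (hp : ‖G p - g p‖ ≤ δ) (hmin : ‖G x‖ ≤ ‖G p‖) :
    ‖g x‖ ≤ ‖g p‖ + 2 * δ := by
  have hgx : ‖g x‖ ≤ ‖G x‖ + ‖G x - g x‖ := norm_le_norm_add_norm_sub (G x) (g x)
  have hGp : ‖G p‖ ≤ ‖g p‖ + ‖G p - g p‖ := norm_le_norm_add_norm_sub' (G p) (g p)
  linarith

section

variable {E : Type*} [NormedAddCommGroup E] [InnerProductSpace ℝ E]

theorem two_mul_mul_sq_norm_sub_le_inner_of_strongConvex {F : E → ℝ} {g : E → E} {lam : ℝ}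
    {x y : E} (hxy : F x + ⟪g x, y - x⟫_ℝ + lam * ‖y - x‖ ^ 2 ≤ F y)
    (hyx : F y + ⟪g y, x - y⟫_ℝ + lam * ‖x - y‖ ^ 2 ≤ F x) :
    2 * lam * ‖x - y‖ ^ 2 ≤ ⟪g x - g y, x - y⟫_ℝ := by
  have hflip : ⟪g x, y - x⟫_ℝ = -⟪g x, x - y⟫_ℝ := by
    rw [← inner_neg_right, neg_sub]
  rw [hflip, norm_sub_rev y x] at hxy
  rw [inner_sub_left]
  linarith

theorem mul_norm_le_norm_of_mul_sq_norm_le_inner {c : ℝ} {u v : E}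
    (h : c * ‖v‖ ^ 2 ≤ ⟪u, v⟫_ℝ) : c * ‖v‖ ≤ ‖u‖ := by
  rcases (norm_nonneg v).eq_or_lt with hv | hv
  · rw [← hv, mul_zero]
    exact norm_nonneg u
  · refine le_of_mul_le_mul_right ?_ hv
    calc c * ‖v‖ * ‖v‖ = c * ‖v‖ ^ 2 := by ring
      _ ≤ ⟪u, v⟫_ℝ := h
      _ ≤ ‖u‖ * ‖v‖ := real_inner_le_norm u v

end

theorem grid_argmin_close_to_minimizer_general
    {E : Type*} [NormedAddCommGroup E] [InnerProductSpace ℝ E]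
    (K : Set E) (lam eps : ℝ) (hlam : 0 < lam)
    (F : E → ℝ) (gF : E → E)
    (hsc : ∀ θ₁ ∈ K, ∀ θ₂ ∈ K,
      F θ₁ + ⟪gF θ₁, θ₂ - θ₁⟫_ℝ + lam * ‖θ₂ - θ₁‖ ^ 2 ≤ F θ₂)
    (hLip : ∀ θ ∈ K, ∀ θ' ∈ K, ‖gF θ - gF θ'‖ ≤ ‖θ - θ'‖)
    (θstar : E) (hθstarK : θstar ∈ K) (hgrad0 : gF θstar = 0)
    (T : Finset E) (hTK : ↑T ⊆ K)
    (pstar : E) (hpstarT : pstar ∈ T) (hpstar : ‖pstar - θstar‖ ≤ eps / 2)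
    (Ghat : E → E) (hGhat : ∀ p ∈ T, ‖Ghat p - gF p‖ ≤ eps / 4)
    (θhat : E) (hθhatT : θhat ∈ T) (hmin : ∀ p ∈ T, ‖Ghat θhat‖ ≤ ‖Ghat p‖) :
    ‖θhat - θstar‖ ≤ eps / lam := by
  have hθhatK : θhat ∈ K := hTK hθhatT
  have hgpstar : ‖gF pstar‖ ≤ eps / 2 := by
    simpa only [hgrad0, sub_zero] using (hLip pstar (hTK hpstarT) θstar hθstarK).trans hpstar
  have hgθhat : ‖gF θhat‖ ≤ eps := by
    have := norm_le_norm_add_of_norm_approx_le (hGhat θhat hθhatT) (hGhat pstar hpstarT)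
      (hmin pstar hpstarT)
    linarith
  have hmono : 2 * lam * ‖θhat - θstar‖ ≤ ‖gF θhat‖ := by
    simpa only [hgrad0, sub_zero] using mul_norm_le_norm_of_mul_sq_norm_le_inner
      (two_mul_mul_sq_norm_sub_le_inner_of_strongConvex
        (hsc θhat hθhatK θstar hθstarK) (hsc θstar hθstarK θhat hθhatK))
  have heps : 0 ≤ eps := by linarith [norm_nonneg (pstar - θstar)]
  rw [le_div_iff₀ hlam]
  linarith [mul_nonneg hlam.le (norm_nonneg (θhat - θstar))]

/-- **Deterministic grid argmin lemma (core of the proof of Theorem 1).**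
If `F` is `λ`-strongly convex on a convex set `K` with `1`-Lipschitz gradient and minimizer
`θ*` (with `∇F(θ*) = 0`), `T ⊆ K` is a finite set containing a point `p*` with
`‖p* − θ*‖ ≤ ε/2`, `Ĝ` is an `ε/4`-accurate approximation of `∇F` on `T`, and `θ̂` minimizes
`‖Ĝ(p)‖` over `T`, then `‖θ̂ − θ*‖ ≤ ε/λ`. -/
theorem grid_argmin_close_to_minimizer
    {E : Type*} [NormedAddCommGroup E] [InnerProductSpace ℝ E]
    (K : Set E) (hK : Convex ℝ K) (lam eps : ℝ) (hlam : 0 < lam) (heps : 0 < eps)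
    (F : E → ℝ) (gF : E → E)
    (hdiff : ∀ θ ∈ K, HasFDerivWithinAt F ((toDualMap ℝ E) (gF θ) : E →L[ℝ] ℝ) K θ)
    (hsc : ∀ θ₁ ∈ K, ∀ θ₂ ∈ K,
      F θ₁ + ⟪gF θ₁, θ₂ - θ₁⟫_ℝ + lam * ‖θ₂ - θ₁‖ ^ 2 ≤ F θ₂)
    (hLip : ∀ θ ∈ K, ∀ θ' ∈ K, ‖gF θ - gF θ'‖ ≤ ‖θ - θ'‖)
    (θstar : E) (hθstarK : θstar ∈ K) (hgrad0 : gF θstar = 0)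
    (T : Finset E) (hTK : ↑T ⊆ K) (hTne : T.Nonempty)
    (pstar : E) (hpstarT : pstar ∈ T) (hpstar : ‖pstar - θstar‖ ≤ eps / 2)
    (Ghat : E → E) (hGhat : ∀ p ∈ T, ‖Ghat p - gF p‖ ≤ eps / 4)
    (θhat : E) (hθhatT : θhat ∈ T) (hmin : ∀ p ∈ T, ‖Ghat θhat‖ ≤ ‖Ghat p‖) :
    ‖θhat - θstar‖ ≤ eps / lam :=
  grid_argmin_close_to_minimizer_general K lam eps hlam F gF hsc hLip θstar hθstarK hgrad0 T hTK
    pstar hpstarT hpstar Ghat hGhat θhat hθhatT hmin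
end

section
/- (Deterministic grid argmin lemma, core of the proof of Proposition 2.) Let λ > 0, k ≥ 1, α ≥ 1, and let F : [−1,1] → ℝ be differentiable with: F λ-strongly convex on [−1,1] (i.e. F(θ₂) ≥ F(θ₁) + F′(θ₁)(θ₂ − θ₁) + λ(θ₂ − θ₁)² for all θ₁, θ₂ ∈ [−1,1]), F′ 1-Lipschitz on [−1,1], and θ* ∈ [−1,1] with F′(θ*) = 0. Let T ⊆ [−1,1] be a nonempty finite set containing some point θ̃ with |θ̃ − θ*| ≤ 1/k, let Ĝ : T → ℝ satisfy |Ĝ(θ) − F′(θ)| ≤ α/k for all θ ∈ T, and let θ̂ ∈ T minimize |Ĝ(θ)| over θ ∈ T. Then |θ̂ − θ*| ≤ 3α/(λk). -/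
/-!
Adding the strong convexity inequality at `(θ̂, θ*)` and at `(θ*, θ̂)` gives strong monotonicity
of `F′`, so `2λ|θ̂ − θ*| ≤ |F′(θ̂)|`. The grid point `θ̃` has `|F′(θ̃)| ≤ 1/k ≤ α/k` by the
Lipschitz bound, and since `θ̂` minimizes the `α/k`-accurate proxy `|Ĝ|`, it pays at most two
approximation errors over `θ̃`: `|F′(θ̂)| ≤ 3α/k`.
-/

lemma strongMonotone_of_strongConvex_tangent {s : Set ℝ} {F F' : ℝ → ℝ} {lam : ℝ}
    (hsc : ∀ x ∈ s, ∀ y ∈ s, F x + F' x * (y - x) + lam * (y - x) ^ 2 ≤ F y)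
    {x y : ℝ} (hx : x ∈ s) (hy : y ∈ s) :
    2 * lam * (y - x) ^ 2 ≤ (F' y - F' x) * (y - x) := by
  have hxy := hsc x hx y hy
  have hyx := hsc y hy x hx
  nlinarith

lemma mul_abs_le_abs_of_mul_sq_le {c d g : ℝ} (h : c * d ^ 2 ≤ g * d) : c * |d| ≤ |g| := by
  rcases eq_or_ne d 0 with rfl | hd
  · simp
  · have hd' : 0 < |d| := abs_pos.mpr hd
    have : |d| * (c * |d|) ≤ |d| * |g| :=
      calc |d| * (c * |d|) = c * d ^ 2 := by rw [← sq_abs d]; ring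
        _ ≤ g * d := h
        _ ≤ |g * d| := le_abs_self _
        _ = |d| * |g| := by rw [abs_mul, mul_comm]
    exact le_of_mul_le_mul_left this hd'

lemma abs_le_of_isMinOn_abs_approx {α : Type*} {s : Set α} {f g : α → ℝ} {ε : ℝ}
    (happrox : ∀ x ∈ s, |g x - f x| ≤ ε) {a b : α} (ha : a ∈ s) (hb : b ∈ s)
    (hmin : IsMinOn (fun x => |g x|) s a) :
    |f a| ≤ |f b| + 2 * ε := by
  have hab : |g a| ≤ |g b| := isMinOn_iff.mp hmin b hb
  have hfa : |f a| ≤ |g a| + |g a - f a| := by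
    simpa using abs_sub (g a) (g a - f a)
  have hgb : |g b| ≤ |f b| + |g b - f b| := by
    simpa using abs_add_le (f b) (g b - f b)
  linarith [happrox a ha, happrox b hb]

theorem grid_argmin_close_to_minimizer_one_dim_general
    (lam k α : ℝ) (hlam : 0 < lam) (hk : 1 ≤ k) (hα : 1 ≤ α)
    (F F' : ℝ → ℝ)
    (hsc : ∀ θ₁ ∈ Set.Icc (-1 : ℝ) 1, ∀ θ₂ ∈ Set.Icc (-1 : ℝ) 1,
      F θ₁ + F' θ₁ * (θ₂ - θ₁) + lam * (θ₂ - θ₁) ^ 2 ≤ F θ₂)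
    (hLip : ∀ θ ∈ Set.Icc (-1 : ℝ) 1, ∀ θ' ∈ Set.Icc (-1 : ℝ) 1,
      |F' θ - F' θ'| ≤ |θ - θ'|)
    (θstar : ℝ) (hθstar : θstar ∈ Set.Icc (-1 : ℝ) 1) (hF'θstar : F' θstar = 0)
    (T : Finset ℝ) (hT : ↑T ⊆ Set.Icc (-1 : ℝ) 1)
    (θtilde : ℝ) (hθtildeT : θtilde ∈ T) (hθtilde : |θtilde - θstar| ≤ 1 / k)
    (Ghat : ℝ → ℝ) (hGhat : ∀ θ ∈ T, |Ghat θ - F' θ| ≤ α / k)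
    (θhat : ℝ) (hθhatT : θhat ∈ T) (hmin : ∀ θ ∈ T, |Ghat θhat| ≤ |Ghat θ|) :
    |θhat - θstar| ≤ 3 * α / (lam * k) := by
  have hk0 : 0 < k := one_pos.trans_le hk
  have hθhat : θhat ∈ Set.Icc (-1 : ℝ) 1 := hT hθhatT
  have hF'tilde : |F' θtilde| ≤ α / k := by
    have := hLip θtilde (hT hθtildeT) θstar hθstar
    rw [hF'θstar, sub_zero] at this
    exact this.trans (hθtilde.trans (by gcongr))
  have hF'hat : |F' θhat| ≤ 3 * α / k := by
    have := abs_le_of_isMinOn_abs_approx hGhat hθhatT hθtildeT (isMinOn_iff.mpr hmin)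
    linarith [show α / k + 2 * (α / k) = 3 * α / k by ring]
  have hdist : 2 * lam * |θhat - θstar| ≤ |F' θhat| := by
    apply mul_abs_le_abs_of_mul_sq_le
    simpa [hF'θstar] using strongMonotone_of_strongConvex_tangent hsc hθstar hθhat
  rw [le_div_iff₀ (by positivity)]
  rw [le_div_iff₀ hk0] at hF'hat
  nlinarith [abs_nonneg (θhat - θstar)]

/-- **Deterministic grid argmin lemma (core of the proof of Proposition 2).**
If `F : [−1,1] → ℝ` is `λ`-strongly convex with `1`-Lipschitz derivative and minimizer `θ*`
(with `F′(θ*) = 0`), `T ⊆ [−1,1]` is a finite set containing a point `θ̃` with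
`|θ̃ − θ*| ≤ 1/k`, `Ĝ` is an `α/k`-accurate approximation of `F′` on `T`, and `θ̂` minimizes
`|Ĝ(θ)|` over `T`, then `|θ̂ − θ*| ≤ 3α/(λk)`. -/
theorem grid_argmin_close_to_minimizer_one_dim
    (lam k α : ℝ) (hlam : 0 < lam) (hk : 1 ≤ k) (hα : 1 ≤ α)
    (F F' : ℝ → ℝ)
    (hdiff : ∀ θ ∈ Set.Icc (-1 : ℝ) 1, HasDerivWithinAt F (F' θ) (Set.Icc (-1 : ℝ) 1) θ)
    (hsc : ∀ θ₁ ∈ Set.Icc (-1 : ℝ) 1, ∀ θ₂ ∈ Set.Icc (-1 : ℝ) 1,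
      F θ₁ + F' θ₁ * (θ₂ - θ₁) + lam * (θ₂ - θ₁) ^ 2 ≤ F θ₂)
    (hLip : ∀ θ ∈ Set.Icc (-1 : ℝ) 1, ∀ θ' ∈ Set.Icc (-1 : ℝ) 1,
      |F' θ - F' θ'| ≤ |θ - θ'|)
    (θstar : ℝ) (hθstar : θstar ∈ Set.Icc (-1 : ℝ) 1) (hF'θstar : F' θstar = 0)
    (T : Finset ℝ) (hT : ↑T ⊆ Set.Icc (-1 : ℝ) 1) (hTne : T.Nonempty)
    (θtilde : ℝ) (hθtildeT : θtilde ∈ T) (hθtilde : |θtilde - θstar| ≤ 1 / k)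
    (Ghat : ℝ → ℝ) (hGhat : ∀ θ ∈ T, |Ghat θ - F' θ| ≤ α / k)
    (θhat : ℝ) (hθhatT : θhat ∈ T) (hmin : ∀ θ ∈ T, |Ghat θhat| ≤ |Ghat θ|) :
    |θhat - θstar| ≤ 3 * α / (lam * k) :=
  grid_argmin_close_to_minimizer_one_dim_general lam k α hlam hk hα F F' hsc hLip θstar hθstar
    hF'θstar T hT θtilde hθtildeT hθtilde Ghat hGhat θhat hθhatT hmin
end
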